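/- arXiv:2401.15530 — 2 statements merged into one kernel-verified Lean document; each statement's English description precedes it below -/
import Mathlib

section
/- Let H̃ : Ω → 𝒳^T be a random variable such that I[H_T ; H̃ | θ] = 0 and the pair (θ, H̃) has the same joint distribution as (θ, H_T) (a conditionally independent copy of the history given θ). Then I[H_T ; θ | H̃] ≤ I[H_T ; θ] and I[θ ; H̃] = I[θ ; H_T]. Consequently, for every ε ≥ 0 with I[H_T ; θ] < εT, the compression θ̃ := H̃ satisfies the distortion constraint I[H_T ; θ | θ̃] ≤ εT while having rate I[θ ; θ̃] ≤ I[H_T ; θ]; this yields the lower bound min{𝕀_{ε,T}(θ), εT} ≤ I[H_T ; θ] where 𝕀_{ε,T}(θ) is the infimum of I[θ;θ̃] over compressions θ̃ meeting the constraints of the previous sentence. (Paper: lower bound of Theorem 'rate-distortion estimation error bound' for sequential learning.) -/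
/-!
Conditioning on `H̃` instead of `θ` in the chain rule for `I[H_T ; (H̃, θ)]` gives
`I[H_T ; θ | H̃] + I[H_T ; H̃] = I[H_T ; H̃ | θ] + I[H_T ; θ]`. The first term on the right vanishes
because `H̃` is a conditionally independent copy, so the distortion of `H̃` is at most `I[H_T ; θ]`
by nonnegativity of `I[H_T ; H̃]` (Gibbs' inequality). Mutual information only depends on the joint
law, so `H̃` has the same rate as `H_T`. Hence `H̃` is an admissible compression whose rate is at
most `I[H_T ; θ]`, which bounds the infimum; if the set of admissible rates is unbounded below,
`sInf` is `0` by convention and the bound follows from `0 ≤ I[H_T ; θ]`.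
-/

open MeasureTheory ProbabilityTheory Real

variable {Ω : Type*} [MeasureSpace Ω]

noncomputable def prob {𝒳 : Type*} (X : Ω → 𝒳) (x : 𝒳) : ℝ :=
  (ℙ (X ⁻¹' {x})).toReal

noncomputable def entropy {𝒳 : Type*} [Fintype 𝒳] (X : Ω → 𝒳) : ℝ :=
  -∑ x, prob X x * Real.log (prob X x)

noncomputable def condEntropy {𝒳 𝒴 : Type*} [Fintype 𝒳] [Fintype 𝒴]
    (X : Ω → 𝒳) (Y : Ω → 𝒴) : ℝ :=
  entropy (fun ω => (X ω, Y ω)) - entropy Y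

noncomputable def mutualInfo {𝒳 𝒴 : Type*} [Fintype 𝒳] [Fintype 𝒴]
    (X : Ω → 𝒳) (Y : Ω → 𝒴) : ℝ :=
  entropy X + entropy Y - entropy (fun ω => (X ω, Y ω))

noncomputable def condMutualInfo {𝒳 𝒴 𝒵 : Type*} [Fintype 𝒳] [Fintype 𝒴] [Fintype 𝒵]
    (X : Ω → 𝒳) (Y : Ω → 𝒴) (Z : Ω → 𝒵) : ℝ :=
  entropy (fun ω => (X ω, Z ω)) + entropy (fun ω => (Y ω, Z ω))
    - entropy (fun ω => (X ω, Y ω, Z ω)) - entropy Z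

def hist {𝒳 : Type*} {T : ℕ} (X : Fin T → Ω → 𝒳) (t : ℕ) (ht : t ≤ T) : Ω → (Fin t → 𝒳) :=
  fun ω i => X (Fin.castLE ht i) ω

theorem mul_log_le_mul_log_add_sub {p q : ℝ} (hp : 0 ≤ p) (hq : 0 ≤ q) (hpq : q = 0 → p = 0) :
    p * log q ≤ p * log p + (q - p) := by
  rcases hp.eq_or_lt with rfl | hp
  · simpa using hq
  have hq : 0 < q := hq.lt_of_ne fun h => hp.ne' (hpq h.symm)
  have h := mul_le_mul_of_nonneg_left (log_le_sub_one_of_pos (div_pos hq hp)) hp.le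
  rw [log_div hq.ne' hp.ne', mul_sub_one, mul_div_cancel₀ _ hp.ne'] at h
  linarith

theorem sum_mul_log_le_sum_mul_log {ι : Type*} [Fintype ι] {p q : ι → ℝ} (hp : 0 ≤ p) (hq : 0 ≤ q)
    (hpq : ∀ i, q i = 0 → p i = 0) (hsum : ∑ i, q i ≤ ∑ i, p i) :
    ∑ i, p i * log (q i) ≤ ∑ i, p i * log (p i) := by
  have h := Finset.sum_le_sum fun i (_ : i ∈ Finset.univ) =>
    mul_log_le_mul_log_add_sub (hp i) (hq i) (hpq i)
  rw [Finset.sum_add_distrib, Finset.sum_sub_distrib] at h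
  linarith

section Entropy

variable {𝒳 𝒴 𝒵 : Type*}

theorem prob_nonneg (X : Ω → 𝒳) (x : 𝒳) : 0 ≤ prob X x := ENNReal.toReal_nonneg

theorem prob_pair_comm (X : Ω → 𝒳) (Y : Ω → 𝒴) (x : 𝒳) (y : 𝒴) :
    prob (fun ω => (Y ω, X ω)) (y, x) = prob (fun ω => (X ω, Y ω)) (x, y) := by
  simp only [prob, Set.preimage, Set.mem_singleton_iff, Prod.mk.injEq, and_comm]

theorem entropy_equiv_comp [Fintype 𝒳] [Fintype 𝒴] (e : 𝒳 ≃ 𝒴) (X : Ω → 𝒳) :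
    entropy (fun ω => e (X ω)) = entropy X := by
  have hprob : ∀ y, prob (fun ω => e (X ω)) y = prob X (e.symm y) := fun y => by
    simp only [prob, Set.preimage, Set.mem_singleton_iff, ← Equiv.eq_symm_apply]
  simp only [entropy, hprob]
  rw [Equiv.sum_comp e.symm fun x => prob X x * log (prob X x)]

theorem entropy_prod_comm [Fintype 𝒳] [Fintype 𝒴] (X : Ω → 𝒳) (Y : Ω → 𝒴) :
    entropy (fun ω => (X ω, Y ω)) = entropy (fun ω => (Y ω, X ω)) :=
  entropy_equiv_comp (Equiv.prodComm _ _) fun ω => (Y ω, X ω)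

theorem mutualInfo_comm [Fintype 𝒳] [Fintype 𝒴] (X : Ω → 𝒳) (Y : Ω → 𝒴) :
    mutualInfo X Y = mutualInfo Y X := by
  rw [mutualInfo, mutualInfo, entropy_prod_comm, add_comm (entropy X)]

/-- The chain rule for `I[X ; (Y, Z)]`, expanded once along `Y` and once along `Z`. -/
theorem condMutualInfo_add_mutualInfo [Fintype 𝒳] [Fintype 𝒴] [Fintype 𝒵]
    (X : Ω → 𝒳) (Y : Ω → 𝒴) (Z : Ω → 𝒵) :
    condMutualInfo X Z Y + mutualInfo X Y = condMutualInfo X Y Z + mutualInfo X Z := by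
  have hswap : entropy (fun ω => (X ω, Z ω, Y ω)) = entropy (fun ω => (X ω, Y ω, Z ω)) :=
    entropy_equiv_comp ((Equiv.refl _).prodCongr (Equiv.prodComm _ _)) fun ω => (X ω, Y ω, Z ω)
  simp only [condMutualInfo, mutualInfo, hswap, entropy_prod_comm Z Y]
  ring

theorem ProbabilityTheory.IdentDistrib.entropy_eq [Fintype 𝒳] [MeasurableSpace 𝒳]
    [MeasurableSingletonClass 𝒳] {X Y : Ω → 𝒳} (h : IdentDistrib X Y ℙ ℙ) :
    entropy X = entropy Y := by
  have hprob : ∀ x, prob X x = prob Y x := fun x => by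
    simp only [prob, ← Measure.map_apply_of_aemeasurable h.aemeasurable_fst
      (measurableSet_singleton x), ← Measure.map_apply_of_aemeasurable h.aemeasurable_snd
      (measurableSet_singleton x), h.map_eq]
  simp only [entropy, hprob]

theorem ProbabilityTheory.IdentDistrib.mutualInfo_eq [Fintype 𝒳] [Fintype 𝒴]
    [MeasurableSpace 𝒳] [MeasurableSingletonClass 𝒳] [MeasurableSpace 𝒴]
    [MeasurableSingletonClass 𝒴] {X X' : Ω → 𝒳} {Y Y' : Ω → 𝒴}
    (h : IdentDistrib (fun ω => (X ω, Y ω)) (fun ω => (X' ω, Y' ω)) ℙ ℙ) :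
    mutualInfo X Y = mutualInfo X' Y' := by
  have hX : IdentDistrib X X' ℙ ℙ := h.comp measurable_fst
  have hY : IdentDistrib Y Y' ℙ ℙ := h.comp measurable_snd
  rw [mutualInfo, mutualInfo, hX.entropy_eq, hY.entropy_eq, h.entropy_eq]

variable [IsProbabilityMeasure (ℙ : Measure Ω)]

theorem prob_pair_le_left (X : Ω → 𝒳) (Y : Ω → 𝒴) (x : 𝒳) (y : 𝒴) :
    prob (fun ω => (X ω, Y ω)) (x, y) ≤ prob X x :=
  measureReal_mono fun ω hω => by simp_all

theorem prob_pair_le_right (X : Ω → 𝒳) (Y : Ω → 𝒴) (x : 𝒳) (y : 𝒴) :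
    prob (fun ω => (X ω, Y ω)) (x, y) ≤ prob Y y :=
  measureReal_mono fun ω hω => by simp_all

theorem sum_prob_eq_one [Fintype 𝒳] [MeasurableSpace 𝒳] [MeasurableSingletonClass 𝒳]
    {X : Ω → 𝒳} (hX : Measurable X) : ∑ x, prob X x = 1 := by
  simp only [prob, ← measureReal_def]
  simpa using sum_measureReal_preimage_singleton (μ := ℙ) Finset.univ
    fun x _ => hX (measurableSet_singleton x)

theorem prob_eq_sum_prob_pair_left [Fintype 𝒴] [MeasurableSpace 𝒴] [MeasurableSingletonClass 𝒴]
    (X : Ω → 𝒳) {Y : Ω → 𝒴} (hY : Measurable Y) (x : 𝒳) :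
    prob X x = ∑ y, prob (fun ω => (X ω, Y ω)) (x, y) := by
  have h := sum_measureReal_preimage_singleton (μ := (ℙ : Measure Ω).restrict (X ⁻¹' {x}))
    Finset.univ fun y _ => hY (measurableSet_singleton y)
  simp only [measureReal_restrict_apply (hY (measurableSet_singleton _)), Finset.coe_univ,
    Set.preimage_univ, measureReal_restrict_apply_univ] at h
  rw [prob, ← measureReal_def, ← h]
  refine Finset.sum_congr rfl fun y _ => congrArg _ ?_
  ext ω
  simp [and_comm]

theorem entropy_eq_sum_pair_left [Fintype 𝒳] [Fintype 𝒴] [MeasurableSpace 𝒴]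
    [MeasurableSingletonClass 𝒴] (X : Ω → 𝒳) {Y : Ω → 𝒴} (hY : Measurable Y) :
    entropy X = -∑ x, ∑ y, prob (fun ω => (X ω, Y ω)) (x, y) * log (prob X x) := by
  simp only [entropy, ← Finset.sum_mul, ← prob_eq_sum_prob_pair_left X hY]

theorem entropy_eq_sum_pair_right [Fintype 𝒳] [Fintype 𝒴] [MeasurableSpace 𝒳]
    [MeasurableSingletonClass 𝒳] {X : Ω → 𝒳} (hX : Measurable X) (Y : Ω → 𝒴) :
    entropy Y = -∑ x, ∑ y, prob (fun ω => (X ω, Y ω)) (x, y) * log (prob Y y) := by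
  rw [Finset.sum_comm]
  simp only [← prob_pair_comm X Y, ← entropy_eq_sum_pair_left Y hX]

theorem mutualInfo_nonneg [Fintype 𝒳] [Fintype 𝒴] [MeasurableSpace 𝒳] [MeasurableSingletonClass 𝒳]
    [MeasurableSpace 𝒴] [MeasurableSingletonClass 𝒴] {X : Ω → 𝒳} {Y : Ω → 𝒴}
    (hX : Measurable X) (hY : Measurable Y) : 0 ≤ mutualInfo X Y := by
  set p : 𝒳 × 𝒴 → ℝ := prob fun ω => (X ω, Y ω)
  set q : 𝒳 × 𝒴 → ℝ := fun z => prob X z.1 * prob Y z.2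
  have hq_eq_zero : ∀ z, q z = 0 → p z = 0 := fun z hz => by
    refine le_antisymm ?_ (prob_nonneg _ _)
    rcases mul_eq_zero.1 hz with h | h
    · exact h ▸ prob_pair_le_left X Y z.1 z.2
    · exact h ▸ prob_pair_le_right X Y z.1 z.2
  have hsum : ∑ z, q z ≤ ∑ z, p z := by
    have hq_sum : ∑ z, q z = 1 := by
      simp only [q, Fintype.sum_prod_type, ← Finset.mul_sum, sum_prob_eq_one hX,
        sum_prob_eq_one hY, mul_one]
    exact hq_sum.trans_le (sum_prob_eq_one (hX.prodMk hY)).ge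
  have hgibbs := sum_mul_log_le_sum_mul_log (p := p) (q := q) (fun z => prob_nonneg _ _)
    (fun z => mul_nonneg (prob_nonneg _ _) (prob_nonneg _ _)) hq_eq_zero hsum
  have hlog_q : ∀ z, p z * log (q z) = p z * log (prob X z.1) + p z * log (prob Y z.2) := by
    intro z
    rcases (prob_nonneg (fun ω => (X ω, Y ω)) z).eq_or_lt with h0 | hpos
    · simp [p, ← h0]
    · rw [log_mul (hpos.trans_le (prob_pair_le_left X Y z.1 z.2)).ne'
        (hpos.trans_le (prob_pair_le_right X Y z.1 z.2)).ne', mul_add]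
  have hcross : ∑ z, p z * log (q z) = -(entropy X + entropy Y) := by
    rw [Finset.sum_congr rfl fun z _ => hlog_q z, Finset.sum_add_distrib, Fintype.sum_prod_type,
      Fintype.sum_prod_type, entropy_eq_sum_pair_left X hY, entropy_eq_sum_pair_right hX Y]
    ring
  have hjoint : ∑ z, p z * log (p z) = -entropy (fun ω => (X ω, Y ω)) := by
    simp only [entropy, neg_neg, p]
  rw [mutualInfo]
  linarith

end Entropy

theorem Real.sInf_le_of_le_of_nonneg {S : Set ℝ} {r a : ℝ} (hr : r ∈ S) (hra : r ≤ a) (ha : 0 ≤ a) :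
    sInf S ≤ a := by
  by_cases hS : BddBelow S
  · exact csInf_le_of_le hS hr hra
  · rwa [Real.sInf_of_not_bddBelow hS]

universe u

theorem rate_distortion_lower_bound_general
    {Ω : Type*} [MeasureSpace Ω] [IsProbabilityMeasure (ℙ : Measure Ω)]
    {𝒳 : Type u} {Θ : Type u} [Fintype 𝒳] [Fintype Θ]
    [MeasurableSpace 𝒳] [MeasurableSingletonClass 𝒳]
    [MeasurableSpace Θ] [MeasurableSingletonClass Θ]
    (T : ℕ)
    (X : Fin T → Ω → 𝒳) (θ : Ω → Θ) (H' : Ω → (Fin T → 𝒳))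
    (hX : ∀ t, Measurable (X t)) (hθ : Measurable θ) (hH' : Measurable H')
    (hCI : condMutualInfo (hist X T le_rfl) H' θ = 0)
    (hID : IdentDistrib (fun ω => (θ ω, H' ω)) (fun ω => (θ ω, hist X T le_rfl ω)) ℙ ℙ) :
    condMutualInfo (hist X T le_rfl) θ H' ≤ mutualInfo (hist X T le_rfl) θ ∧
    mutualInfo θ H' = mutualInfo θ (hist X T le_rfl) ∧
    ∀ ε : ℝ, 0 ≤ ε → mutualInfo (hist X T le_rfl) θ < ε * T →
      (condMutualInfo (hist X T le_rfl) θ H' ≤ ε * T ∧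
        mutualInfo θ H' ≤ mutualInfo (hist X T le_rfl) θ ∧
        min (sInf {r : ℝ | ∃ (Θ' : Type u) (_ : Fintype Θ') (θ' : Ω → Θ'),
            condMutualInfo (hist X T le_rfl) θ' θ = 0 ∧
            condMutualInfo (hist X T le_rfl) θ θ' ≤ ε * T ∧
            r = mutualInfo θ θ'}) (ε * T)
          ≤ mutualInfo (hist X T le_rfl) θ) := by
  have hH : Measurable (hist X T le_rfl) := measurable_pi_lambda _ fun i => hX _
  have distortion : condMutualInfo (hist X T le_rfl) θ H' ≤ mutualInfo (hist X T le_rfl) θ := by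
    linarith [condMutualInfo_add_mutualInfo (hist X T le_rfl) H' θ, mutualInfo_nonneg hH hH']
  have rate : mutualInfo θ H' = mutualInfo (hist X T le_rfl) θ :=
    hID.mutualInfo_eq.trans (mutualInfo_comm θ _)
  refine ⟨distortion, hID.mutualInfo_eq, fun ε _ hlt => ⟨distortion.trans hlt.le, rate.le, ?_⟩⟩
  exact min_le_of_left_le <| Real.sInf_le_of_le_of_nonneg
    ⟨_, inferInstance, H', hCI, distortion.trans hlt.le, rfl⟩ rate.le (mutualInfo_nonneg hH hθ)

/-- **Rate-distortion estimation error bound, lower bound** (paper, Theorem 2, lower bound).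
Let `H'` be a conditionally independent copy of the history `H_T` given `θ`, i.e.
`I[H_T ; H' | θ] = 0` and `(θ, H')` has the same joint distribution as `(θ, H_T)`.
Then `I[H_T ; θ | H'] ≤ I[H_T ; θ]` and `I[θ ; H'] = I[θ ; H_T]`.  Consequently, for every
`ε ≥ 0` with `I[H_T ; θ] < ε T`, the compression `θ̃ := H'` satisfies the distortion
constraint `I[H_T ; θ | θ̃] ≤ ε T` while having rate `I[θ ; θ̃] ≤ I[H_T ; θ]`; this yields
the lower bound `min{𝕀_{ε,T}(θ), ε T} ≤ I[H_T ; θ]` where `𝕀_{ε,T}(θ)` is the infimum of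
`I[θ ; θ̃]` over compressions `θ̃` meeting these constraints. -/
theorem rate_distortion_lower_bound
    {Ω : Type*} [MeasureSpace Ω] [IsProbabilityMeasure (ℙ : Measure Ω)]
    {𝒳 : Type u} {Θ : Type u} [Fintype 𝒳] [Nonempty 𝒳] [Fintype Θ] [Nonempty Θ]
    [MeasurableSpace 𝒳] [MeasurableSingletonClass 𝒳]
    [MeasurableSpace Θ] [MeasurableSingletonClass Θ]
    (T : ℕ) (hT : 1 ≤ T)
    (X : Fin T → Ω → 𝒳) (θ : Ω → Θ) (H' : Ω → (Fin T → 𝒳))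
    (hX : ∀ t, Measurable (X t)) (hθ : Measurable θ) (hH' : Measurable H')
    (hCI : condMutualInfo (hist X T le_rfl) H' θ = 0)
    (hID : IdentDistrib (fun ω => (θ ω, H' ω)) (fun ω => (θ ω, hist X T le_rfl ω)) ℙ ℙ) :
    condMutualInfo (hist X T le_rfl) θ H' ≤ mutualInfo (hist X T le_rfl) θ ∧
    mutualInfo θ H' = mutualInfo θ (hist X T le_rfl) ∧
    ∀ ε : ℝ, 0 ≤ ε → mutualInfo (hist X T le_rfl) θ < ε * T →
      (condMutualInfo (hist X T le_rfl) θ H' ≤ ε * T ∧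
        mutualInfo θ H' ≤ mutualInfo (hist X T le_rfl) θ ∧
        min (sInf {r : ℝ | ∃ (Θ' : Type u) (_ : Fintype Θ') (θ' : Ω → Θ'),
            condMutualInfo (hist X T le_rfl) θ' θ = 0 ∧
            condMutualInfo (hist X T le_rfl) θ θ' ≤ ε * T ∧
            r = mutualInfo θ θ'}) (ε * T)
          ≤ mutualInfo (hist X T le_rfl) θ) :=
  rate_distortion_lower_bound_general T X θ H' hX hθ hH' hCI hID
end

section
/- In-context learning error bound: extend the meta-learning setup to M+1 documents, i.e. ψ, θ_1,…,θ_{M+1}, and D_1,…,D_{M+1} with D_m = (X^{(m)}_1,…,X^{(m)}_T), such that conditioned on ψ the pairs (θ_m, D_m), m = 1,…,M+1, are i.i.d., and I[D_m ; ψ | θ_m] = 0 for every m. For 1 ≤ τ ≤ T write W = (X^{(M+1)}_1,…,X^{(M+1)}_τ) for the in-context sequence and H_{M+1,t} = (D_1,…,D_M, X^{(M+1)}_1,…,X^{(M+1)}_t). Then the optimal in-context average log-loss satisfies (1/τ) Σ_{t=0}^{τ−1} H[X^{(M+1)}_{t+1} | H_{M+1,t}] ≤ H[W | θ_{M+1}]/τ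 + I[(D_1,…,D_M) ; ψ]/(Mτ) + I[W ; θ_{M+1} | ψ]/τ. (Paper: Theorem 'in context learning error bound'.) -/
open MeasureTheory ProbabilityTheory Real

variable {Ω : Type*} [MeasureSpace Ω]

/-!
The chain rule turns the cumulative log-loss into `H[W | D]`, where `D = (D₁, …, D_M)`.
Splitting `I[W ; θ]` through `ψ`, and using `I[W ; ψ | θ] = 0` (a consequence of
`I[D_{M+1} ; ψ | θ_{M+1}] = 0`), gives
`H[W | D] ≤ H[W | θ] + I[W ; θ | ψ] + I[D_{M+1} ; ψ | D]`.
The last term is the meta-estimation error. By exchangeability, each of the `M` chain-rule terms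
`I[D_{t+1} ; ψ | D₁, …, D_t]` of `I[D ; ψ]` equals `I[D_{M+1} ; ψ | D₁, …, D_t]`. Since
`D_{M+1}` is conditionally independent of the other documents given `ψ`, conditioning on more
of them can only lower what `D_{M+1}` reveals about `ψ`, so each term is at least
`I[D_{M+1} ; ψ | D]`.
-/

open Finset

section Relabel

variable {α β γ δ : Type*}

lemma prob_comp_of_injective {f : α → β} (hf : f.Injective) (A : Ω → α) (a : α) :
    prob (fun ω => f (A ω)) (f a) = prob A a := by
  simp only [prob, Set.preimage, Set.mem_singleton_iff, hf.eq_iff]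

variable [Fintype α] [Fintype β] [Fintype γ] [Fintype δ]

lemma entropy_comp_of_injective {f : α → β} (hf : f.Injective) (A : Ω → α) :
    entropy (fun ω => f (A ω)) = entropy A := by
  classical
  have hzero : ∀ b ∉ univ.image f, prob (fun ω => f (A ω)) b = 0 := fun b hb => by
    simp only [mem_image, mem_univ, true_and, not_exists] at hb
    simp [prob, Set.preimage, hb]
  rw [entropy, entropy, ← sum_subset (subset_univ (univ.image f))
    (fun b _ hb => by rw [hzero b hb, zero_mul]), sum_image fun a _ a' _ h => hf h]
  simp only [prob_comp_of_injective hf]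

lemma entropy_prod_comm_s9 (A : Ω → α) (B : Ω → β) :
    entropy (fun ω => (A ω, B ω)) = entropy (fun ω => (B ω, A ω)) :=
  entropy_comp_of_injective Prod.swap_injective (fun ω => (B ω, A ω))

lemma entropy_prod_comp_left_of_injective {f : α → β} (hf : f.Injective) (A : Ω → α)
    (C : Ω → γ) : entropy (fun ω => (f (A ω), C ω)) = entropy (fun ω => (A ω, C ω)) :=
  entropy_comp_of_injective (hf.prodMap Function.injective_id) (fun ω => (A ω, C ω))

lemma condEntropy_comp_left_of_injective {f : α → β} (hf : f.Injective) (A : Ω → α)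
    (C : Ω → γ) : condEntropy (fun ω => f (A ω)) C = condEntropy A C := by
  rw [condEntropy, condEntropy, entropy_prod_comp_left_of_injective hf]

lemma mutualInfo_comp_left_of_injective {f : α → β} (hf : f.Injective) (A : Ω → α)
    (B : Ω → γ) : mutualInfo (fun ω => f (A ω)) B = mutualInfo A B := by
  rw [mutualInfo, mutualInfo, entropy_comp_of_injective hf,
    entropy_prod_comp_left_of_injective hf]

lemma condMutualInfo_comp_left_of_injective {f : α → β} (hf : f.Injective) (A : Ω → α)
    (B : Ω → γ) (Z : Ω → δ) :
    condMutualInfo (fun ω => f (A ω)) B Z = condMutualInfo A B Z := by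
  rw [condMutualInfo, condMutualInfo, entropy_prod_comp_left_of_injective hf,
    entropy_prod_comp_left_of_injective hf A (fun ω => (B ω, Z ω))]

lemma mutualInfo_comm_s9 (A : Ω → α) (B : Ω → β) : mutualInfo A B = mutualInfo B A := by
  rw [mutualInfo, mutualInfo, entropy_prod_comm_s9]
  ring

lemma condEntropy_prod (A : Ω → α) (B : Ω → β) (C : Ω → γ) :
    condEntropy (fun ω => (A ω, B ω)) C
      = condEntropy B C + condEntropy A (fun ω => (C ω, B ω)) := by
  have h : entropy (fun ω => ((A ω, B ω), C ω)) = entropy (fun ω => (A ω, C ω, B ω)) :=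
    entropy_comp_of_injective (f := fun x : α × γ × β => ((x.1, x.2.2), x.2.1))
      (fun x y h => by simp_all [Prod.ext_iff]) (fun ω => (A ω, C ω, B ω))
  rw [condEntropy, condEntropy, condEntropy, h, entropy_prod_comm_s9 C B]
  ring

lemma mutualInfo_prod_left (A : Ω → α) (B : Ω → β) (Y : Ω → γ) :
    mutualInfo (fun ω => (A ω, B ω)) Y = mutualInfo B Y + condMutualInfo A Y B := by
  have h : entropy (fun ω => ((A ω, B ω), Y ω)) = entropy (fun ω => (A ω, Y ω, B ω)) :=
    entropy_comp_of_injective (f := fun x : α × γ × β => ((x.1, x.2.2), x.2.1))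
      (fun x y h => by simp_all [Prod.ext_iff]) (fun ω => (A ω, Y ω, B ω))
  rw [mutualInfo, mutualInfo, condMutualInfo, h, entropy_prod_comm_s9 Y B]
  ring

lemma condMutualInfo_prod_left (A : Ω → α) (B : Ω → β) (Y : Ω → γ) (Z : Ω → δ) :
    condMutualInfo (fun ω => (A ω, B ω)) Y Z
      = condMutualInfo B Y Z + condMutualInfo A Y (fun ω => (B ω, Z ω)) := by
  have h₁ : entropy (fun ω => ((A ω, B ω), Z ω)) = entropy (fun ω => (A ω, B ω, Z ω)) :=
    entropy_comp_of_injective (f := fun x : α × β × δ => ((x.1, x.2.1), x.2.2))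
      (fun x y h => by simp_all [Prod.ext_iff]) (fun ω => (A ω, B ω, Z ω))
  have h₂ : entropy (fun ω => (Y ω, B ω, Z ω)) = entropy (fun ω => (B ω, Y ω, Z ω)) :=
    entropy_comp_of_injective (f := fun x : β × γ × δ => (x.2.1, x.1, x.2.2))
      (fun x y h => by simp_all [Prod.ext_iff]) (fun ω => (B ω, Y ω, Z ω))
  have h₃ : entropy (fun ω => ((A ω, B ω), Y ω, Z ω))
      = entropy (fun ω => (A ω, Y ω, B ω, Z ω)) :=
    entropy_comp_of_injective (f := fun x : α × γ × β × δ => ((x.1, x.2.2.1), x.2.1, x.2.2.2))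
      (fun x y h => by simp_all [Prod.ext_iff]) (fun ω => (A ω, Y ω, B ω, Z ω))
  rw [condMutualInfo, condMutualInfo, condMutualInfo, h₁, h₂, h₃]
  ring

lemma mutualInfo_add_condMutualInfo (A : Ω → α) (B : Ω → β) (C : Ω → γ) :
    mutualInfo A B + condMutualInfo A C B = mutualInfo A C + condMutualInfo A B C := by
  have h : entropy (fun ω => (A ω, C ω, B ω)) = entropy (fun ω => (A ω, B ω, C ω)) :=
    entropy_comp_of_injective (f := fun x : α × β × γ => (x.1, x.2.2, x.2.1))
      (fun x y h => by simp_all [Prod.ext_iff]) (fun ω => (A ω, B ω, C ω))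
  rw [mutualInfo, mutualInfo, condMutualInfo, condMutualInfo, h, entropy_prod_comm_s9 C B]
  ring

end Relabel

lemma sub_le_mul_log_div {p q : ℝ} (hp : 0 ≤ p) (hq : 0 ≤ q) (hpq : q = 0 → p = 0) :
    p - q ≤ p * log (p / q) := by
  rcases hp.eq_or_lt with rfl | hp
  · simpa using hq
  have hq : 0 < q := hq.lt_of_ne fun h => hp.ne' (hpq h.symm)
  have h := one_sub_inv_le_log_of_pos (div_pos hp hq)
  rw [inv_div] at h
  calc p - q = p * (1 - q / p) := by field_simp
    _ ≤ p * log (p / q) := mul_le_mul_of_nonneg_left h hp.le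

lemma sum_mul_log_div_nonneg {ι : Type*} [Fintype ι] {p q : ι → ℝ} (hp : ∀ i, 0 ≤ p i)
    (hq : ∀ i, 0 ≤ q i) (hpq : ∀ i, q i = 0 → p i = 0) (hsum : ∑ i, q i ≤ ∑ i, p i) :
    0 ≤ ∑ i, p i * log (p i / q i) :=
  calc 0 ≤ ∑ i, (p i - q i) := by rw [sum_sub_distrib]; linarith
    _ ≤ _ := sum_le_sum fun i _ => sub_le_mul_log_div (hp i) (hq i) (hpq i)

lemma prob_nonneg_s9 {α : Type*} (A : Ω → α) (a : α) : 0 ≤ prob A a := ENNReal.toReal_nonneg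

section Measure

variable [IsProbabilityMeasure (ℙ : Measure Ω)]

lemma prob_le_prob_comp {α β : Type*} (A : Ω → α) (f : α → β) (a : α) :
    prob A a ≤ prob (fun ω => f (A ω)) (f a) :=
  ENNReal.toReal_mono (measure_ne_top _ _)
    (measure_mono fun ω (h : A ω = a) => show f (A ω) = f a by rw [h])

lemma prob_eq_zero_of_prob_comp_eq_zero {α β : Type*} (A : Ω → α) {f : α → β} {a : α}
    (h : prob (fun ω => f (A ω)) (f a) = 0) : prob A a = 0 :=
  le_antisymm (h ▸ prob_le_prob_comp A f a) (prob_nonneg_s9 A a)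

lemma entropy_of_subsingleton {α : Type*} [Fintype α] [Subsingleton α] (A : Ω → α) :
    entropy A = 0 := by
  have hpre (a : α) : A ⁻¹' {a} = Set.univ :=
    Set.eq_univ_of_forall fun ω => Subsingleton.elim (A ω) a
  simp [entropy, prob, hpre]

variable {α β γ : Type*}
  [Fintype α] [MeasurableSpace α] [MeasurableSingletonClass α]
  [Fintype β] [MeasurableSpace β] [MeasurableSingletonClass β]
  [Fintype γ] [MeasurableSpace γ] [MeasurableSingletonClass γ]
  {A : Ω → α} {B : Ω → β} {Z : Ω → γ}

lemma prob_comp_eq_sum {δ : Type*} [DecidableEq δ] (hA : Measurable A) (f : α → δ) (d : δ) :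
    prob (fun ω => f (A ω)) d = ∑ a ∈ univ.filter (f · = d), prob A a := by
  have hpre : (fun ω => f (A ω)) ⁻¹' {d} = A ⁻¹' ↑(univ.filter (f · = d)) := by ext; simp
  rw [prob, hpre, ← sum_measure_preimage_singleton _ fun a _ => hA (measurableSet_singleton a),
    ENNReal.toReal_sum fun a _ => measure_ne_top _ _]
  rfl

lemma sum_prob_eq_one_s9 (hA : Measurable A) : ∑ a, prob A a = 1 := by
  simp only [prob]
  rw [← ENNReal.toReal_sum fun a _ => measure_ne_top _ _,
    sum_measure_preimage_singleton _ fun a _ => hA (measurableSet_singleton a)]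
  simp

lemma sum_prob_prod_left (hA : Measurable A) (hB : Measurable B) (b : β) :
    ∑ a, prob (fun ω => (A ω, B ω)) (a, b) = prob B b := by
  classical
  rw [prob_comp_eq_sum (hA.prodMk hB) Prod.snd b, sum_filter, Fintype.sum_prod_type]
  simp

lemma sum_prob_prod_mid (hA : Measurable A) (hB : Measurable B) (hZ : Measurable Z)
    (a : α) (z : γ) :
    ∑ b, prob (fun ω => (A ω, B ω, Z ω)) (a, b, z) = prob (fun ω => (A ω, Z ω)) (a, z) := by
  classical
  rw [prob_comp_eq_sum (hA.prodMk (hB.prodMk hZ)) (fun x => (x.1, x.2.2)) (a, z), sum_filter,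
    Fintype.sum_prod_type, sum_eq_single a (fun a' _ h => by simp [h]) (by simp),
    Fintype.sum_prod_type]
  simp

lemma entropy_comp_eq_sum {δ : Type*} [Fintype δ] (hA : Measurable A) (f : α → δ) :
    entropy (fun ω => f (A ω)) = -∑ a, prob A a * log (prob (fun ω => f (A ω)) (f a)) := by
  classical
  rw [entropy, ← sum_fiberwise univ f]
  congr 1
  refine sum_congr rfl fun d _ => ?_
  rw [sum_congr rfl fun a ha => by rw [(mem_filter.1 ha).2], ← sum_mul,
    ← prob_comp_eq_sum hA f d]

lemma entropy_comp_congr {δ : Type*} [Fintype δ] {A' : Ω → α} (hA : Measurable A)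
    (hA' : Measurable A') (h : ∀ a, prob A a = prob A' a) (f : α → δ) :
    entropy (fun ω => f (A ω)) = entropy (fun ω => f (A' ω)) := by
  classical
  simp only [entropy, prob_comp_eq_sum hA, prob_comp_eq_sum hA', h]

lemma condMutualInfo_comp_congr {β₁ β₂ β₃ : Type*} [Fintype β₁] [Fintype β₂] [Fintype β₃]
    {A' : Ω → α} (hA : Measurable A) (hA' : Measurable A') (h : ∀ a, prob A a = prob A' a)
    (f₁ : α → β₁) (f₂ : α → β₂) (f₃ : α → β₃) :
    condMutualInfo (fun ω => f₁ (A ω)) (fun ω => f₂ (A ω)) (fun ω => f₃ (A ω))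
      = condMutualInfo (fun ω => f₁ (A' ω)) (fun ω => f₂ (A' ω)) (fun ω => f₃ (A' ω)) := by
  rw [condMutualInfo, condMutualInfo, entropy_comp_congr hA hA' h (fun a => (f₁ a, f₃ a)),
    entropy_comp_congr hA hA' h (fun a => (f₂ a, f₃ a)),
    entropy_comp_congr hA hA' h (fun a => (f₁ a, f₂ a, f₃ a)), entropy_comp_congr hA hA' h f₃]

lemma condMutualInfo_eq_sum (hA : Measurable A) (hB : Measurable B) (hZ : Measurable Z) :
    condMutualInfo A B Z = ∑ x : α × β × γ, prob (fun ω => (A ω, B ω, Z ω)) x *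
      log (prob (fun ω => (A ω, B ω, Z ω)) x / (prob (fun ω => (A ω, Z ω)) (x.1, x.2.2) *
        prob (fun ω => (B ω, Z ω)) x.2 / prob Z x.2.2)) := by
  have hG : Measurable fun ω => (A ω, B ω, Z ω) := hA.prodMk (hB.prodMk hZ)
  rw [condMutualInfo, entropy_comp_eq_sum hG (fun x => (x.1, x.2.2)),
    entropy_comp_eq_sum hG Prod.snd, entropy_comp_eq_sum hG (fun x => x.2.2), entropy]
  simp only [← sum_neg_distrib, ← sum_add_distrib, ← sum_sub_distrib]
  refine sum_congr rfl fun x _ => ?_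
  rcases (prob_nonneg_s9 (fun ω => (A ω, B ω, Z ω)) x).eq_or_lt with hp | hp
  · simp [← hp]
  have hu := hp.trans_le (prob_le_prob_comp (fun ω => (A ω, B ω, Z ω)) (fun x => (x.1, x.2.2)) x)
  have hv := hp.trans_le (prob_le_prob_comp (fun ω => (A ω, B ω, Z ω)) Prod.snd x)
  have hw := hp.trans_le (prob_le_prob_comp (fun ω => (A ω, B ω, Z ω)) (fun x => x.2.2) x)
  rw [log_div hp.ne' (by positivity), log_div (by positivity) hw.ne', log_mul hu.ne' hv.ne']
  ring

lemma condMutualInfo_nonneg (hA : Measurable A) (hB : Measurable B) (hZ : Measurable Z) :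
    0 ≤ condMutualInfo A B Z := by
  rw [condMutualInfo_eq_sum hA hB hZ]
  refine sum_mul_log_div_nonneg (fun x => prob_nonneg_s9 _ x)
    (fun x => div_nonneg (mul_nonneg (prob_nonneg_s9 _ _) (prob_nonneg_s9 _ _)) (prob_nonneg_s9 _ _))
    (fun x hx => ?_) ?_
  · rcases div_eq_zero_iff.1 hx with h | h
    · rcases mul_eq_zero.1 h with h | h
      · exact prob_eq_zero_of_prob_comp_eq_zero _ (f := fun x => (x.1, x.2.2)) h
      · exact prob_eq_zero_of_prob_comp_eq_zero _ (f := Prod.snd) h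
    · exact prob_eq_zero_of_prob_comp_eq_zero _ (f := fun x => x.2.2) h
  · rw [sum_prob_eq_one_s9 (hA.prodMk (hB.prodMk hZ)), ← sum_prob_eq_one_s9 hZ,
      Fintype.sum_prod_type, sum_comm, Fintype.sum_prod_type_right]
    refine le_of_eq <| sum_congr rfl fun z _ => ?_
    simp_rw [mul_div_assoc, ← sum_mul, sum_prob_prod_left hA hZ, ← mul_sum, ← sum_div,
      sum_prob_prod_left hB hZ, ← mul_div_assoc, mul_self_div_self]

lemma condMutualInfo_eq_zero_of_prob_eq_mul (hA : Measurable A) (hB : Measurable B)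
    (hZ : Measurable Z) {f : γ → α → ℝ} {g : γ → β → ℝ} (hf : ∀ z, ∑ a, f z a = 1)
    (hg : ∀ z, ∑ b, g z b = 1)
    (h : ∀ a b z, prob (fun ω => (A ω, B ω, Z ω)) (a, b, z) = prob Z z * f z a * g z b) :
    condMutualInfo A B Z = 0 := by
  have hAZ : ∀ a z, prob (fun ω => (A ω, Z ω)) (a, z) = prob Z z * f z a := fun a z => by
    simp_rw [← sum_prob_prod_mid hA hB hZ, h, ← mul_sum, hg, mul_one]
  have hBZ : ∀ b z, prob (fun ω => (B ω, Z ω)) (b, z) = prob Z z * g z b := fun b z => by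
    simp_rw [← sum_prob_prod_left hA (hB.prodMk hZ), h, ← sum_mul, ← mul_sum, hf, mul_one]
  rw [condMutualInfo_eq_sum hA hB hZ]
  refine sum_eq_zero fun ⟨a, b, z⟩ _ => ?_
  have hq : prob Z z * f z a * (prob Z z * g z b) / prob Z z = prob Z z * f z a * g z b := by
    rcases eq_or_ne (prob Z z) 0 with h0 | h0
    · simp [h0]
    · field_simp
  simp only [hAZ, hBZ, h, hq]
  rcases eq_or_ne (prob Z z * f z a * g z b) 0 with h0 | h0
  · simp [h0]
  · simp [div_self h0]

lemma condMutualInfo_comp_left_le (hA : Measurable A) (hB : Measurable B) (hZ : Measurable Z)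
    {δ : Type*} [Fintype δ] [MeasurableSpace δ] [MeasurableSingletonClass δ] (f : α → δ) :
    condMutualInfo (fun ω => f (A ω)) B Z ≤ condMutualInfo A B Z := by
  rw [← condMutualInfo_comp_left_of_injective (f := fun a => (a, f a))
    (fun a a' h => congrArg Prod.fst h), condMutualInfo_prod_left]
  have hfA : Measurable fun ω => f (A ω) := (measurable_of_finite f).comp hA
  linarith [condMutualInfo_nonneg hA hB (hfA.prodMk hZ)]

lemma mutualInfo_comp_right_le (hA : Measurable A) (hB : Measurable B)
    {δ : Type*} [Fintype δ] [MeasurableSpace δ] [MeasurableSingletonClass δ] (f : β → δ) :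
    mutualInfo A (fun ω => f (B ω)) ≤ mutualInfo A B := by
  rw [mutualInfo_comm_s9, mutualInfo_comm_s9 A, ← mutualInfo_comp_left_of_injective
    (f := fun b => (b, f b)) (fun b b' h => congrArg Prod.fst h), mutualInfo_prod_left]
  have hfB : Measurable fun ω => f (B ω) := (measurable_of_finite f).comp hB
  linarith [condMutualInfo_nonneg hB hA hfB]

lemma condMutualInfo_le_condMutualInfo_comp_of_eq_zero (hA : Measurable A) (hB : Measurable B)
    (hZ : Measurable Z) (hAB : condMutualInfo A B Z = 0)
    {δ : Type*} [Fintype δ] [MeasurableSpace δ] [MeasurableSingletonClass δ] (f : β → δ) :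
    condMutualInfo A Z B ≤ condMutualInfo A Z (fun ω => f (B ω)) := by
  have hfB : Measurable fun ω => f (B ω) := (measurable_of_finite f).comp hB
  have h₁ := mutualInfo_add_condMutualInfo A Z B
  have h₂ := mutualInfo_add_condMutualInfo A Z (fun ω => f (B ω))
  linarith [mutualInfo_comp_right_le hA hB f, condMutualInfo_nonneg hA hfB hZ]

lemma condEntropy_le_of_condMutualInfo_eq_zero {ε : Type*} [Fintype ε] {Y : Ω → ε}
    (hA : Measurable A) (hB : Measurable B) (hZ : Measurable Z) (h : condMutualInfo A Z Y = 0) :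
    condEntropy A B ≤ condEntropy A Y + condMutualInfo A Y Z + condMutualInfo A Z B := by
  have hsplit : condEntropy A B = condEntropy A Y + mutualInfo A Y - mutualInfo A B := by
    simp only [condEntropy, mutualInfo]
    ring
  linarith [mutualInfo_add_condMutualInfo A Y Z, mutualInfo_add_condMutualInfo A Z B,
    condMutualInfo_nonneg hA hB hZ]

end Measure

section Chain

variable {α γ : Type*} [Fintype α] [Fintype γ]

lemma sum_condEntropy_take {n : ℕ} (Y : Fin n → Ω → α) (C : Ω → γ) :
    ∑ t : Fin n, condEntropy (Y t) (fun ω => (C ω, Fin.take t t.isLt.le fun i => Y i ω))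
      = condEntropy (fun ω i => Y i ω) C := by
  induction n with
  | zero =>
    have hsnd : (Prod.snd : (Fin 0 → α) × γ → γ).Injective :=
      fun x y h => Prod.ext (Subsingleton.elim _ _) h
    rw [Fin.sum_univ_zero, condEntropy, eq_comm, sub_eq_zero]
    exact (entropy_comp_of_injective hsnd (fun ω => ((fun i => Y i ω), C ω))).symm
  | succ n ih =>
    rw [Fin.sum_univ_castSucc,
      ← condEntropy_comp_left_of_injective (f := fun v => (v (Fin.last n), Fin.init v))
        (Fin.snocEquiv _).symm.injective (fun ω i => Y i ω) C, condEntropy_prod]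
    exact congrArg (· + _) (ih fun t => Y t.castSucc)

lemma sum_condMutualInfo_take [IsProbabilityMeasure (ℙ : Measure Ω)] {n : ℕ}
    (Y : Fin n → Ω → α) (Z : Ω → γ) :
    ∑ t : Fin n, condMutualInfo (Y t) Z (fun ω => Fin.take t t.isLt.le fun i => Y i ω)
      = mutualInfo (fun ω i => Y i ω) Z := by
  induction n with
  | zero =>
    have hsnd : (Prod.snd : (Fin 0 → α) × γ → γ).Injective :=
      fun x y h => Prod.ext (Subsingleton.elim _ _) h
    rw [Fin.sum_univ_zero, mutualInfo, entropy_of_subsingleton,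
      ← entropy_comp_of_injective hsnd (fun ω => ((fun i => Y i ω), Z ω))]
    ring
  | succ n ih =>
    rw [Fin.sum_univ_castSucc,
      ← mutualInfo_comp_left_of_injective (f := fun v => (v (Fin.last n), Fin.init v))
        (Fin.snocEquiv _).symm.injective (fun ω i => Y i ω) Z, mutualInfo_prod_left]
    exact congrArg (· + _) (ih fun t => Y t.castSucc)

end Chain

section CondIID

variable {Ψ E ι : Type*} [Fintype E] [Fintype ι]

/-- The `V m` are conditionally i.i.d. given `ψ`, each with conditional law `κ s` given
`ψ = s`. -/
structure IsCondIID (ψ : Ω → Ψ) (V : ι → Ω → E) (κ : Ψ → E → ℝ) : Prop where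
  sum_kernel : ∀ s, ∑ e, κ s e = 1
  prob_eq : ∀ s v, prob (fun ω => (ψ ω, fun m => V m ω)) (s, v) = prob ψ s * ∏ m, κ s (v m)

variable {ψ : Ω → Ψ} {V : ι → Ω → E} {κ : Ψ → E → ℝ}

lemma IsCondIID.comp_perm (h : IsCondIID ψ V κ) (σ : Equiv.Perm ι) :
    IsCondIID ψ (fun m => V (σ m)) κ := by
  refine ⟨h.sum_kernel, fun s v => ?_⟩
  have hinj : (Prod.map id fun w : ι → E => w ∘ σ : Ψ × (ι → E) → Ψ × (ι → E)).Injective :=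
    Function.injective_id.prodMap σ.surjective.injective_comp_right
  have hv : Prod.map id (fun w : ι → E => w ∘ σ) (s, v ∘ σ.symm) = (s, v) := by
    ext m <;> simp
  rw [← hv]
  refine (prob_comp_of_injective hinj (fun ω => (ψ ω, fun m => V m ω)) _).trans ?_
  rw [h.prob_eq, ← Equiv.prod_comp σ.symm fun m => κ s (v m)]
  rfl

variable [IsProbabilityMeasure (ℙ : Measure Ω)]
  [Fintype Ψ] [MeasurableSpace Ψ] [MeasurableSingletonClass Ψ]
  [MeasurableSpace E] [MeasurableSingletonClass E]

lemma IsCondIID.map {F : Type*} [Fintype F] [DecidableEq F] (h : IsCondIID ψ V κ)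
    (hψ : Measurable ψ) (hV : ∀ m, Measurable (V m)) (φ : E → F) :
    IsCondIID ψ (fun m ω => φ (V m ω)) fun s y => ∑ e ∈ univ.filter (φ · = y), κ s e := by
  classical
  refine ⟨fun s => by rw [sum_fiberwise univ φ (κ s), h.sum_kernel], fun s y => ?_⟩
  rw [prob_comp_eq_sum (hψ.prodMk (measurable_pi_lambda _ hV))
    (fun g => (g.1, fun m => φ (g.2 m))) (s, y), sum_filter, Fintype.sum_prod_type]
  simp only [Prod.mk.injEq, ite_and, sum_ite_irrel, sum_const_zero, sum_ite_eq', mem_univ,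
    if_true, h.prob_eq, sum_filter, Fintype.prod_sum, mul_sum, prod_ite_zero, funext_iff,
    mul_ite, mul_zero, true_implies]

variable {n : ℕ} {V : Fin (n + 1) → Ω → E}

lemma IsCondIID.condMutualInfo_last_init_eq_zero (h : IsCondIID ψ V κ) (hψ : Measurable ψ)
    (hV : ∀ m, Measurable (V m)) :
    condMutualInfo (V (Fin.last n)) (fun ω (j : Fin n) => V j.castSucc ω) ψ = 0 := by
  have hinj : (fun g : Ψ × (Fin (n + 1) → E) => (g.2 (Fin.last n), Fin.init g.2, g.1)).Injective :=
    fun g g' hg => Prod.ext (Prod.ext_iff.1 (Prod.ext_iff.1 hg).2).2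
      ((Fin.snocEquiv _).symm.injective (Prod.ext (Prod.ext_iff.1 hg).1
        (Prod.ext_iff.1 (Prod.ext_iff.1 hg).2).1))
  refine condMutualInfo_eq_zero_of_prob_eq_mul (hV _) (measurable_pi_lambda _ fun j => hV _) hψ
    (f := κ) (g := fun s b => ∏ j, κ s (b j)) h.sum_kernel
    (fun s => by simp [← Fintype.prod_sum, h.sum_kernel]) fun a b s => ?_
  have := prob_comp_of_injective hinj (fun ω => (ψ ω, fun m => V m ω)) (s, Fin.snoc b a)
  simp only [Fin.snoc_last, Fin.init_snoc] at this
  refine this.trans ?_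
  rw [h.prob_eq, Fin.prod_univ_castSucc]
  simp only [Fin.snoc_castSucc, Fin.snoc_last]
  ring

lemma IsCondIID.condMutualInfo_last_le (h : IsCondIID ψ V κ) (hψ : Measurable ψ)
    (hV : ∀ m, Measurable (V m)) (t : Fin n) :
    condMutualInfo (V (Fin.last n)) ψ (fun ω (j : Fin n) => V j.castSucc ω)
      ≤ condMutualInfo (V t.castSucc) ψ
          (fun ω => Fin.take t t.isLt.le fun j : Fin n => V j.castSucc ω) := by
  have hfix (i : Fin t) : Equiv.swap t.castSucc (Fin.last n) (Fin.castLE t.isLt.le i).castSucc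
      = (Fin.castLE t.isLt.le i).castSucc :=
    Equiv.swap_apply_of_ne_of_ne (Fin.ne_of_val_ne (by simp; omega))
      (Fin.ne_of_val_ne (by simp; omega))
  have hprefix : (fun ω => Fin.take t t.isLt.le fun j : Fin n =>
      V (Equiv.swap t.castSucc (Fin.last n) j.castSucc) ω)
      = fun ω => Fin.take t t.isLt.le fun j : Fin n => V j.castSucc ω := by
    funext ω i
    simp only [Fin.take_apply, hfix]
  -- swapping documents `t` and `n` does not change the joint law
  have hexch := condMutualInfo_comp_congr
    (hψ.prodMk (measurable_pi_lambda _ fun m => hV _)) (hψ.prodMk (measurable_pi_lambda _ hV))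
    (fun g => by rw [(h.comp_perm (Equiv.swap t.castSucc (Fin.last n))).prob_eq, h.prob_eq])
    (fun g => g.2 (Fin.last n)) Prod.fst
    (fun g => Fin.take t t.isLt.le fun j : Fin n => g.2 j.castSucc)
  simp only [Equiv.swap_apply_right, hprefix] at hexch
  calc _ ≤ condMutualInfo (V (Fin.last n)) ψ
        (fun ω => Fin.take t t.isLt.le fun j : Fin n => V j.castSucc ω) :=
      condMutualInfo_le_condMutualInfo_comp_of_eq_zero (hV _)
        (measurable_pi_lambda _ fun j => hV _) hψ (h.condMutualInfo_last_init_eq_zero hψ hV)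
        (Fin.take t t.isLt.le)
    _ = _ := hexch.symm

lemma IsCondIID.mul_condMutualInfo_le (h : IsCondIID ψ V κ) (hψ : Measurable ψ)
    (hV : ∀ m, Measurable (V m)) :
    n * condMutualInfo (V (Fin.last n)) ψ (fun ω (j : Fin n) => V j.castSucc ω)
      ≤ mutualInfo (fun ω (j : Fin n) => V j.castSucc ω) ψ :=
  calc _ = ∑ _t : Fin n,
        condMutualInfo (V (Fin.last n)) ψ (fun ω (j : Fin n) => V j.castSucc ω) := by simp
    _ ≤ _ := sum_le_sum fun t _ => h.condMutualInfo_last_le hψ hV t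
    _ = _ := sum_condMutualInfo_take (fun j : Fin n => V j.castSucc) ψ

end CondIID

theorem in_context_learning_error_bound_general
    {Ω : Type*} [MeasureSpace Ω] [IsProbabilityMeasure (ℙ : Measure Ω)]
    {𝒳 Θ Ψ : Type*} [Fintype 𝒳] [Fintype Θ]
    [Fintype Ψ]
    [MeasurableSpace 𝒳] [MeasurableSingletonClass 𝒳]
    [MeasurableSpace Θ] [MeasurableSingletonClass Θ]
    [MeasurableSpace Ψ] [MeasurableSingletonClass Ψ]
    (M T : ℕ) (hM : 1 ≤ M)
    (ψ : Ω → Ψ) (θ : Fin (M + 1) → Ω → Θ) (X : Fin (M + 1) → Fin T → Ω → 𝒳)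
    (hψ : Measurable ψ) (hθ : ∀ m, Measurable (θ m)) (hX : ∀ m t, Measurable (X m t))
    -- (i) conditioned on ψ, the pairs (θ_m, D_m), m = 1, …, M+1, are i.i.d.
    (hiid : ∃ κ : Ψ → Θ × (Fin T → 𝒳) → ℝ,
      (∀ s u, 0 ≤ κ s u) ∧ (∀ s, ∑ u, κ s u = 1) ∧
      ∀ (s : Ψ) (v : Fin (M + 1) → Θ × (Fin T → 𝒳)),
        prob (fun ω => (ψ ω, fun m => (θ m ω, fun t => X m t ω))) (s, v)
          = prob ψ s * ∏ m, κ s (v m))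
    -- (ii) the meta-parameter carries no extra information about D_m beyond θ_m
    (hCI : ∀ m : Fin (M + 1), condMutualInfo (fun ω (t : Fin T) => X m t ω) ψ (θ m) = 0)
    (τ : ℕ) (hτ : τ ≤ T) :
    (1 / (τ : ℝ)) * ∑ t : Fin τ,
        condEntropy (X (Fin.last M) (Fin.castLE hτ t))
          (fun ω => ((fun (j : Fin M) (s : Fin T) => X j.castSucc s ω),
                     (fun (i : Fin t.val) => X (Fin.last M)
                        (Fin.castLE (t.isLt.le.trans hτ) i) ω)))
      ≤ condEntropy (fun ω (i : Fin τ) => X (Fin.last M) (Fin.castLE hτ i) ω)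
          (θ (Fin.last M)) / τ
        + mutualInfo (fun ω (j : Fin M) (s : Fin T) => X j.castSucc s ω) ψ / ((M : ℝ) * τ)
        + condMutualInfo (fun ω (i : Fin τ) => X (Fin.last M) (Fin.castLE hτ i) ω)
            (θ (Fin.last M)) ψ / τ := by
  classical
  obtain ⟨κ, -, hκ, hprob⟩ := hiid
  set L := fun ω (t : Fin T) => X (Fin.last M) t ω
  set W := fun ω (i : Fin τ) => X (Fin.last M) (Fin.castLE hτ i) ω
  set D := fun ω (j : Fin M) (s : Fin T) => X j.castSucc s ω
  have hL : Measurable L := measurable_pi_lambda _ fun t => hX _ t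
  have hW : Measurable W := measurable_pi_lambda _ fun i => hX _ _
  have hD : Measurable D := measurable_pi_lambda _ fun j => measurable_pi_lambda _ (hX _)
  have hdocs := (IsCondIID.mk hκ hprob : IsCondIID ψ (fun m ω => (θ m ω, fun t => X m t ω)) κ).map
    hψ (fun m => (hθ m).prodMk (measurable_pi_lambda _ (hX m))) Prod.snd
  have hmeta : (M : ℝ) * condMutualInfo L ψ D ≤ mutualInfo D ψ :=
    hdocs.mul_condMutualInfo_le hψ fun m => measurable_pi_lambda _ (hX m)
  have hWψθ : condMutualInfo W ψ (θ (Fin.last M)) = 0 :=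
    le_antisymm ((condMutualInfo_comp_left_le hL hψ (hθ _) (Fin.take τ hτ)).trans_eq (hCI _))
      (condMutualInfo_nonneg hW hψ (hθ _))
  have hWL : condMutualInfo W ψ D ≤ condMutualInfo L ψ D :=
    condMutualInfo_comp_left_le hL hψ hD (Fin.take τ hτ)
  have hLD := (le_div_iff₀' (by exact_mod_cast hM : (0 : ℝ) < M)).2 hmeta
  have hsplit := condEntropy_le_of_condMutualInfo_eq_zero hW hD hψ hWψθ
  calc _ = 1 / (τ : ℝ) * condEntropy W D := congrArg (1 / (τ : ℝ) * ·)
        (sum_condEntropy_take (fun t : Fin τ => X (Fin.last M) (Fin.castLE hτ t)) D)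
    _ ≤ 1 / (τ : ℝ) * (condEntropy W (θ (Fin.last M)) + mutualInfo D ψ / M
        + condMutualInfo W (θ (Fin.last M)) ψ) := by gcongr; linarith
    _ = _ := by ring

/-- **In-context learning error bound** (paper, Theorem 7).
Extend the meta-learning setup to `M+1` documents: conditioned on `ψ`, the pairs
`(θ_m, D_m)` for `m = 1, …, M+1` are i.i.d., and `I[D_m ; ψ | θ_m] = 0` for every `m`.
For `1 ≤ τ ≤ T`, letting `W = (X^{(M+1)}_1, …, X^{(M+1)}_τ)` be the in-context sequence
and `H_{M+1,t} = (D_1, …, D_M, X^{(M+1)}_1, …, X^{(M+1)}_t)`, the optimal in-context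
average log-loss is bounded by irreducible error, meta-estimation error, and in-context
estimation error:
`(1/τ) ∑_{t=0}^{τ-1} H[X^{(M+1)}_{t+1} | H_{M+1,t}]
   ≤ H[W | θ_{M+1}]/τ + I[(D_1,…,D_M) ; ψ]/(Mτ) + I[W ; θ_{M+1} | ψ]/τ`. -/
theorem in_context_learning_error_bound
    {Ω : Type*} [MeasureSpace Ω] [IsProbabilityMeasure (ℙ : Measure Ω)]
    {𝒳 Θ Ψ : Type*} [Fintype 𝒳] [Nonempty 𝒳] [Fintype Θ] [Nonempty Θ]
    [Fintype Ψ] [Nonempty Ψ]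
    [MeasurableSpace 𝒳] [MeasurableSingletonClass 𝒳]
    [MeasurableSpace Θ] [MeasurableSingletonClass Θ]
    [MeasurableSpace Ψ] [MeasurableSingletonClass Ψ]
    (M T : ℕ) (hM : 1 ≤ M) (hT : 1 ≤ T)
    (ψ : Ω → Ψ) (θ : Fin (M + 1) → Ω → Θ) (X : Fin (M + 1) → Fin T → Ω → 𝒳)
    (hψ : Measurable ψ) (hθ : ∀ m, Measurable (θ m)) (hX : ∀ m t, Measurable (X m t))
    -- (i) conditioned on ψ, the pairs (θ_m, D_m), m = 1, …, M+1, are i.i.d.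
    (hiid : ∃ κ : Ψ → Θ × (Fin T → 𝒳) → ℝ,
      (∀ s u, 0 ≤ κ s u) ∧ (∀ s, ∑ u, κ s u = 1) ∧
      ∀ (s : Ψ) (v : Fin (M + 1) → Θ × (Fin T → 𝒳)),
        prob (fun ω => (ψ ω, fun m => (θ m ω, fun t => X m t ω))) (s, v)
          = prob ψ s * ∏ m, κ s (v m))
    -- (ii) the meta-parameter carries no extra information about D_m beyond θ_m
    (hCI : ∀ m : Fin (M + 1), condMutualInfo (fun ω (t : Fin T) => X m t ω) ψ (θ m) = 0)
    (τ : ℕ) (hτ1 : 1 ≤ τ) (hτ : τ ≤ T) :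
    (1 / (τ : ℝ)) * ∑ t : Fin τ,
        condEntropy (X (Fin.last M) (Fin.castLE hτ t))
          (fun ω => ((fun (j : Fin M) (s : Fin T) => X j.castSucc s ω),
                     (fun (i : Fin t.val) => X (Fin.last M)
                        (Fin.castLE (t.isLt.le.trans hτ) i) ω)))
      ≤ condEntropy (fun ω (i : Fin τ) => X (Fin.last M) (Fin.castLE hτ i) ω)
          (θ (Fin.last M)) / τ
        + mutualInfo (fun ω (j : Fin M) (s : Fin T) => X j.castSucc s ω) ψ / ((M : ℝ) * τ)
        + condMutualInfo (fun ω (i : Fin τ) => X (Fin.last M) (Fin.castLE hτ i) ω)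
            (θ (Fin.last M)) ψ / τ :=
  in_context_learning_error_bound_general M T hM ψ θ X hψ hθ hX hiid hCI τ hτ
end
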